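/- For r ≥ 2, (1/2^{r/2}) Σ_{j=1}^{2^r} e^{2πi·5j²/2^{r+1}} = (-1)^{r-1} e^{πi/4}. -/

import Mathlib

open Complex Finset

lemma exp_period (x y : ℂ) (n : ℕ) (h : x = y + n * (2 * (Real.pi:ℂ) * I)) :
    Complex.exp x = Complex.exp y := by
  rw [h, Complex.exp_add,
    (by exact_mod_cast Complex.exp_int_mul_two_pi_mul_I (n:ℤ) :
      Complex.exp ((n:ℂ) * (2*(Real.pi:ℂ)*I)) = 1), mul_one]

lemma exp_neg_period (x y : ℂ) (n : ℕ) (h : x = y + (2*(n:ℂ)+1) * ((Real.pi:ℂ) * I)) :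
    Complex.exp x = - Complex.exp y := by
  rw [h, Complex.exp_add, show ((2*(n:ℂ)+1) * ((Real.pi:ℂ)*I)) = (Real.pi:ℂ)*I + n*(2*(Real.pi:ℂ)*I) by ring,
    Complex.exp_add, Complex.exp_pi_mul_I,
    (by exact_mod_cast Complex.exp_int_mul_two_pi_mul_I (n:ℤ) :
      Complex.exp ((n:ℂ) * (2*(Real.pi:ℂ)*I)) = 1)]
  ring

lemma sum_even_odd (f : ℕ → ℂ) (n : ℕ) :
    ∑ j ∈ Finset.range (2*n), f j
      = ∑ i ∈ Finset.range n, f (2*i) + ∑ i ∈ Finset.range n, f (2*i+1) := by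
  induction n with
  | zero => simp
  | succ n ih =>
      rw [show 2*(n+1) = 2*n+1+1 by ring, Finset.sum_range_succ, Finset.sum_range_succ, ih,
        Finset.sum_range_succ, Finset.sum_range_succ]
      ring

noncomputable def S (r : ℕ) : ℂ :=
  ∑ j ∈ Finset.range (2^r),
    Complex.exp (2 * (Real.pi:ℂ) * Complex.I * 5 * (j : ℂ) ^ 2 / (2 ^ (r + 1) : ℂ))

lemma Srec (s : ℕ) : S (s+3) = 2 * S (s+1) := by
  set r := s + 1 with hrdef
  have h2 : ((2:ℂ)^(r+3)) ≠ 0 := pow_ne_zero _ two_ne_zero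
  have h1 : ((2:ℂ)^(r+1)) ≠ 0 := pow_ne_zero _ two_ne_zero
  rw [S, show (2:ℕ)^(r+2) = 2 * 2^(r+1) by ring, sum_even_odd]
  -- even part
  have heven : ∑ i ∈ Finset.range (2^(r+1)),
      Complex.exp (2 * (Real.pi:ℂ) * Complex.I * 5 * ((2*i : ℕ) : ℂ) ^ 2 / (2 ^ (r+2+1) : ℂ))
      = 2 * S r := by
    have hterm : ∀ i : ℕ,
        Complex.exp (2 * (Real.pi:ℂ) * Complex.I * 5 * ((2*i : ℕ) : ℂ) ^ 2 / (2 ^ (r+2+1) : ℂ))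
        = Complex.exp (2 * (Real.pi:ℂ) * Complex.I * 5 * (i : ℂ) ^ 2 / (2 ^ (r+1) : ℂ)) := by
      intro i
      congr 1
      push_cast
      rw [div_eq_div_iff h2 h1]
      ring
    simp only [hterm]
    rw [show (2:ℕ)^(r+1) = 2^r + 2^r by ring, Finset.sum_range_add, S]
    have hshift : ∀ i : ℕ,
        Complex.exp (2 * (Real.pi:ℂ) * Complex.I * 5 * ((2^r + i : ℕ) : ℂ) ^ 2 / (2 ^ (r+1) : ℂ))
        = Complex.exp (2 * (Real.pi:ℂ) * Complex.I * 5 * (i : ℂ) ^ 2 / (2 ^ (r+1) : ℂ)) := by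
      intro i
      apply exp_period _ _ (5*i + 5*2^s)
      push_cast [hrdef]
      field_simp
      ring
    simp only [hshift]
    ring
  -- odd part
  have hodd : ∑ i ∈ Finset.range (2^(r+1)),
      Complex.exp (2 * (Real.pi:ℂ) * Complex.I * 5 * ((2*i+1 : ℕ) : ℂ) ^ 2 / (2 ^ (r+2+1) : ℂ))
      = 0 := by
    rw [show (2:ℕ)^(r+1) = 2^r + 2^r by ring, Finset.sum_range_add]
    have hshift : ∀ i : ℕ,
        Complex.exp (2 * (Real.pi:ℂ) * Complex.I * 5 * ((2*(2^r + i)+1 : ℕ) : ℂ) ^ 2 / (2 ^ (r+2+1) : ℂ))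
        = - Complex.exp (2 * (Real.pi:ℂ) * Complex.I * 5 * ((2*i+1 : ℕ) : ℂ) ^ 2 / (2 ^ (r+2+1) : ℂ)) := by
      intro i
      apply exp_neg_period _ _ (5*i + 2 + 5*2^s)
      push_cast [hrdef]
      field_simp
      ring
    simp only [hshift]
    rw [Finset.sum_neg_distrib]
    ring
  rw [heven, hodd]
  ring

lemma S2 : S 2 = -2 * Complex.exp ((Real.pi:ℂ) * I / 4) := by
  rw [S]
  norm_num [Finset.sum_range_succ]
  rw [(exp_neg_period _ ((Real.pi:ℂ)*I/4) 0 (by push_cast; ring) :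
        Complex.exp (2 * (Real.pi:ℂ) * Complex.I * 5 / 8) = _),
      (exp_neg_period _ 0 2 (by push_cast; ring) :
        Complex.exp (2 * (Real.pi:ℂ) * Complex.I * 5 * 4 / 8) = _),
      (exp_neg_period _ ((Real.pi:ℂ)*I/4) 5 (by push_cast; ring) :
        Complex.exp (2 * (Real.pi:ℂ) * Complex.I * 5 * 9 / 8) = _),
      Complex.exp_zero]
  ring

lemma S3 : S 3 = 2 + 2 * I := by
  rw [S]
  norm_num [Finset.sum_range_succ]
  rw [(exp_neg_period _ (2 * (Real.pi:ℂ) * Complex.I * 5 / 16) 2 (by push_cast; ring) :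
        Complex.exp (2 * (Real.pi:ℂ) * Complex.I * 5 * 9 / 16) = _),
      (exp_neg_period _ (2 * (Real.pi:ℂ) * Complex.I * 5 / 16) 7 (by push_cast; ring) :
        Complex.exp (2 * (Real.pi:ℂ) * Complex.I * 5 * 25 / 16) = _),
      (exp_period _ (2 * (Real.pi:ℂ) * Complex.I * 5 / 16) 15 (by push_cast; ring) :
        Complex.exp (2 * (Real.pi:ℂ) * Complex.I * 5 * 49 / 16) = _),
      (exp_period _ ((Real.pi:ℂ)*I/2) 1 (by push_cast; ring) :
        Complex.exp (2 * (Real.pi:ℂ) * Complex.I * 5 * 4 / 16) = _),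
      (exp_period _ ((Real.pi:ℂ)*I/2) 11 (by push_cast; ring) :
        Complex.exp (2 * (Real.pi:ℂ) * Complex.I * 5 * 36 / 16) = _),
      (exp_period _ 0 5 (by push_cast; ring) :
        Complex.exp (2 * (Real.pi:ℂ) * Complex.I * 5) = _),
      Complex.exp_zero]
  rw [show ((Real.pi:ℂ)*I/2) = ((Real.pi/2 : ℝ):ℂ) * I by push_cast; ring, Complex.exp_mul_I,
    ← Complex.ofReal_cos, ← Complex.ofReal_sin, Real.cos_pi_div_two, Real.sin_pi_div_two]
  push_cast
  ring

lemma expE : Complex.exp ((Real.pi:ℂ) * I / 4)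
    = ((Real.sqrt 2 / 2 : ℝ) : ℂ) + ((Real.sqrt 2 / 2 : ℝ) : ℂ) * I := by
  rw [show ((Real.pi:ℂ)*I/4) = ((Real.pi/4 : ℝ):ℂ) * I by push_cast; ring, Complex.exp_mul_I,
    ← Complex.ofReal_cos, ← Complex.ofReal_sin, Real.cos_pi_div_four, Real.sin_pi_div_four]

lemma Smain : ∀ r : ℕ, 2 ≤ r →
    S r = (-1:ℂ)^(r-1) * ((Real.sqrt ((2:ℝ)^r) : ℝ) : ℂ) * Complex.exp ((Real.pi:ℂ) * I / 4) := by
  intro r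
  induction r using Nat.strong_induction_on with
  | _ r ih =>
    intro hr
    match r, ih, hr with
    | 2, _, _ =>
        rw [S2, show (2-1 : ℕ) = 1 from rfl, Real.sqrt_sq (by norm_num : (0:ℝ) ≤ 2)]
        push_cast
        ring
    | 3, _, _ =>
        have h8 : Real.sqrt ((2:ℝ)^3) * Real.sqrt 2 = 4 := by
          rw [← Real.sqrt_mul (by norm_num), show ((2:ℝ)^3 * 2) = 4^2 by norm_num,
            Real.sqrt_sq (by norm_num : (0:ℝ) ≤ 4)]
        have h8C : ((Real.sqrt ((2:ℝ)^3) : ℝ) : ℂ) * ((Real.sqrt 2 : ℝ) : ℂ) = 4 := by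
          exact_mod_cast congrArg (fun x : ℝ => (x : ℂ)) h8
        rw [S3, expE, show (3-1 : ℕ) = 2 from rfl]
        push_cast
        linear_combination (-(1:ℂ)/2 - I/2) * h8C
    | (n+4), ih, _ =>
        have ih2 := ih (n+2) (by omega) (by omega)
        have hsq : Real.sqrt ((2:ℝ)^(n+4)) = 2 * Real.sqrt ((2:ℝ)^(n+2)) := by
          rw [show ((2:ℝ)^(n+4)) = 2^2 * 2^(n+2) by ring,
            Real.sqrt_mul (by norm_num : (0:ℝ) ≤ 2^2),
            Real.sqrt_sq (by norm_num : (0:ℝ) ≤ 2)]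
        rw [show n+4 = (n+1)+3 by ring, Srec (n+1), show (n+1)+1 = n+2 by ring, ih2,
          show (n+1)+3 = n+4 by ring, hsq,
          show (n+4-1 : ℕ) = (n+2-1)+2 by omega, pow_add]
        push_cast
        ring

/-- For `r ≥ 2`, `(1/2^{r/2}) Σ_{j=1}^{2^r} e^{2πi·5j²/2^{r+1}} = (-1)^{r-1} e^{πi/4}`. -/
theorem stmt_10 (r : ℕ) (hr : 2 ≤ r) :
    (∑ j ∈ Finset.Icc 1 (2 ^ r : ℕ),
        Complex.exp (2 * Real.pi * Complex.I * 5 * (j : ℂ) ^ 2 / (2 ^ (r + 1) : ℂ))) /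
      (Real.sqrt ((2 : ℝ) ^ r) : ℂ) =
      (-1 : ℂ) ^ (r - 1) * Complex.exp (Real.pi * Complex.I / 4) := by
  obtain ⟨s, rfl⟩ : ∃ s, r = s + 2 := ⟨r - 2, by omega⟩
  set r := s + 2 with hrdef
  have hS : (∑ j ∈ Finset.Icc 1 (2 ^ r : ℕ),
      Complex.exp (2 * Real.pi * Complex.I * 5 * (j : ℂ) ^ 2 / (2 ^ (r + 1) : ℂ))) = S r := by
    rw [← Finset.Ico_add_one_right_eq_Icc, Finset.sum_Ico_eq_sum_range, S, Nat.add_sub_cancel]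
    have h0 : Complex.exp (2 * (Real.pi:ℂ) * Complex.I * 5 * ((0:ℕ) : ℂ) ^ 2 / (2 ^ (r + 1) : ℂ)) = 1 := by
      norm_num
    have hN : Complex.exp (2 * (Real.pi:ℂ) * Complex.I * 5 * ((2^r : ℕ) : ℂ) ^ 2 / (2 ^ (r + 1) : ℂ)) = 1 := by
      rw [(exp_period _ 0 (5 * 2^(s+1)) ?_ :
        Complex.exp (2 * (Real.pi:ℂ) * Complex.I * 5 * ((2^r : ℕ) : ℂ) ^ 2 / (2 ^ (r + 1) : ℂ)) = _),
        Complex.exp_zero]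
      have h1 : ((2:ℂ)^(r+1)) ≠ 0 := pow_ne_zero _ two_ne_zero
      push_cast [hrdef]
      field_simp
      ring
    have key := Finset.sum_range_succ'
      (fun j => Complex.exp (2 * (Real.pi:ℂ) * Complex.I * 5 * ((j:ℕ) : ℂ) ^ 2 / (2 ^ (r + 1) : ℂ))) (2^r)
    have key2 := Finset.sum_range_succ
      (fun j => Complex.exp (2 * (Real.pi:ℂ) * Complex.I * 5 * ((j:ℕ) : ℂ) ^ 2 / (2 ^ (r + 1) : ℂ))) (2^r)
    have : ∀ i : ℕ, (((1 + i : ℕ) : ℂ)) = (((i + 1 : ℕ)) : ℂ) := by intro i; push_cast; ring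
    calc ∑ i ∈ Finset.range (2^r),
          Complex.exp (2 * (Real.pi:ℂ) * Complex.I * 5 * ((1 + i : ℕ) : ℂ) ^ 2 / (2 ^ (r + 1) : ℂ))
        = ∑ i ∈ Finset.range (2^r),
          Complex.exp (2 * (Real.pi:ℂ) * Complex.I * 5 * ((i + 1 : ℕ) : ℂ) ^ 2 / (2 ^ (r + 1) : ℂ)) := by
          refine Finset.sum_congr rfl fun i _ => by rw [this i]
      _ = ∑ j ∈ Finset.range (2^r),
          Complex.exp (2 * (Real.pi:ℂ) * Complex.I * 5 * ((j:ℕ) : ℂ) ^ 2 / (2 ^ (r + 1) : ℂ)) := by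
          have h := key.symm.trans key2
          rw [h0, hN] at h
          exact add_right_cancel h
  rw [hS, Smain r (by omega)]
  have hne : ((Real.sqrt ((2:ℝ)^r) : ℝ) : ℂ) ≠ 0 := by
    simp only [ne_eq, Complex.ofReal_eq_zero]
    exact (Real.sqrt_pos.mpr (by positivity)).ne'
  rw [div_eq_iff hne]
  ring
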